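/- Fix D, C ≥ 1, p ∈ [1,∞), r₀ > 0 and ε ∈ (0,1). If Y is a closed subset of a complete metric measure space (X,d,μ) and Y is (ε,C,D,p)-PI fillable at scale r₀, then (Y, d, μ|_Y) is D/(1−ε)-doubling at scale r₀, i.e. 0 < μ(Y ∩ B(x,2r)) ≤ (D/(1−ε))·μ(Y ∩ B(x,r)) for all x ∈ Y and r ∈ (0,r₀). -/
import Mathlib


open MeasureTheory Metric Set Filter Topology
open scoped NNReal ENNReal

universe u

noncomputable section

variable {X : Type u} [MetricSpace X]

/-- Pointwise Lipschitz constant of `f` at `x`, relative to the set `Y`. -/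
def lipConstOn (Y : Set X) (f : X → ℝ) (x : X) : ℝ :=
  Filter.limsup (fun y => |f x - f y| / dist x y) (nhdsWithin x (Y \ {x}))

/-- `γ` is an `A`-uniform curve joining `x` and `y` inside `Ω`. -/
def IsUniformCurve (A : ℝ) (Ω : Set X) (x y : X) (γ : ℝ → X) : Prop :=
  ContinuousOn γ (Icc 0 1) ∧ γ 0 = x ∧ γ 1 = y ∧
  (∀ t ∈ Icc (0 : ℝ) 1, γ t ∈ Ω) ∧
  Metric.diam (γ '' Icc 0 1) ≤ A * dist x y ∧
  ∀ t ∈ Icc (0 : ℝ) 1,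
    A⁻¹ * min (Metric.diam (γ '' Icc 0 t)) (Metric.diam (γ '' Icc t 1)) ≤
      Metric.infDist (γ t) (frontier Ω)

/-- `Ω` is `A`-uniform up to scale `r`. -/
def IsUniformUpTo (A : ℝ) (Ω : Set X) (r : ℝ) : Prop :=
  ∀ x ∈ Ω, ∀ y ∈ Ω, dist x y < r → ∃ γ : ℝ → X, IsUniformCurve A Ω x y γ

/-- `Ω` is `A`-uniform. -/
def IsUniform (A : ℝ) (Ω : Set X) : Prop :=
  ∀ x ∈ Ω, ∀ y ∈ Ω, ∃ γ : ℝ → X, IsUniformCurve A Ω x y γ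

/-- `R` is `A`-co-uniform: it is bounded and open, its complement is `A`-uniform,
    and its boundary is connected. -/
def IsCoUniform (A : ℝ) (R : Set X) : Prop :=
  IsOpen R ∧ Bornology.IsBounded R ∧ IsUniform A Rᶜ ∧ IsConnected (frontier R)

/-- Distance between two sets. -/
def setDist (E F : Set X) : ℝ :=
  sInf ((fun q : X × X => dist q.1 q.2) '' (E ×ˢ F))

/-- `X` is `C`-quasiconvex: any two points are joined by a rectifiable curve of
    length at most `C` times their distance. -/
def QuasiconvexSpace (C : ℝ) (X' : Type u) [MetricSpace X'] : Prop :=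
  ∀ x y : X', ∃ L : ℝ, 0 ≤ L ∧ L ≤ C * dist x y ∧
    ∃ γ : ℝ → X', LipschitzOnWith 1 γ (Icc 0 L) ∧ γ 0 = x ∧ γ L = y

/-- `Y` is `Λ`-quasiconvex at scale `r₀`: points of `Y` at distance `< r₀` are
    joined by rectifiable curves lying in `Y` of length at most `Λ` times their
    distance. -/
def QuasiconvexOnAtScale (Y : Set X) (Λ r₀ : ℝ) : Prop :=
  ∀ x ∈ Y, ∀ y ∈ Y, dist x y < r₀ →
    ∃ L : ℝ, 0 ≤ L ∧ L ≤ Λ * dist x y ∧ ∃ γ : ℝ → X,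
      LipschitzOnWith 1 γ (Icc 0 L) ∧ γ 0 = x ∧ γ L = y ∧
      ∀ t ∈ Icc (0 : ℝ) L, γ t ∈ Y

/-- `X` is `D`-metric doubling: every ball is covered by at most `D` balls of half
    the radius. -/
def MetricDoubling (X' : Type u) [MetricSpace X'] (D : ℝ) : Prop :=
  ∀ x : X', ∀ r : ℝ, 0 < r → ∃ t : Finset X', (t.card : ℝ) ≤ D ∧
    ball x r ⊆ ⋃ y ∈ t, ball y (r / 2)

variable [MeasurableSpace X]

/-- `(1,p)`-Poincaré inequality at scale `r₀` with constant `C` for the subset `Y`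
    with the restricted metric and measure. -/
def PoincareOnAtScale (μ : Measure X) (Y : Set X) (p C r₀ : ℝ) : Prop :=
  ∀ f : X → ℝ, (∃ K : ℝ≥0, LipschitzOnWith K f Y) →
    ∀ x ∈ Y, ∀ r : ℝ, 0 < r → r < r₀ →
      (⨍ y in Y ∩ ball x r, |f y - ⨍ z in Y ∩ ball x r, f z ∂μ| ∂μ) ≤
        C * r * (⨍ y in Y ∩ ball x (C * r), lipConstOn Y f y ^ p ∂μ) ^ (1 / p)

/-- Global `(1,p)`-Poincaré inequality: valid at every scale. -/
def GlobalPoincareOn (μ : Measure X) (Y : Set X) (p C : ℝ) : Prop :=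
  ∀ r₀ : ℝ, 0 < r₀ → PoincareOnAtScale μ Y p C r₀

/-- `D`-doubling at scale `r₀` for the subset `Y` with restricted measure and metric. -/
def DoublingOnAtScale (μ : Measure X) (Y : Set X) (D r₀ : ℝ) : Prop :=
  ∀ x ∈ Y, ∀ r : ℝ, 0 < r → r < r₀ →
    0 < μ (Y ∩ ball x (2 * r)) ∧
      μ (Y ∩ ball x (2 * r)) ≤ ENNReal.ofReal D * μ (Y ∩ ball x r)

/-- Ahlfors `Q`-regularity with constant `CAR` for the subset `Y`. -/
def AhlforsRegularOn (μ : Measure X) (Y : Set X) (Q CAR : ℝ) : Prop :=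
  ∀ x ∈ Y, ∀ r : ℝ, 0 < r → r < Metric.diam Y →
    ENNReal.ofReal (r ^ Q / CAR) ≤ μ (Y ∩ ball x r) ∧
      μ (Y ∩ ball x r) ≤ ENNReal.ofReal (CAR * r ^ Q)

/-- Restricted centered maximal function of the indicator of `E`, relative to `Y`. -/
def maxSetOn (μ : Measure X) (Y : Set X) (s : ℝ) (E : Set X) (x : X) : ℝ≥0∞ :=
  ⨆ r ∈ Ioo (0 : ℝ) s, μ (E ∩ Y ∩ ball x r) / μ (Y ∩ ball x r)

/-- Restricted centered maximal function of a function `g`, relative to `Y`. -/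
def maxFnOn (μ : Measure X) (Y : Set X) (s : ℝ) (g : X → ℝ) (x : X) : ℝ≥0∞ :=
  ⨆ r ∈ Ioo (0 : ℝ) s, (∫⁻ y in Y ∩ ball x r, ENNReal.ofReal |g y| ∂μ) / μ (Y ∩ ball x r)

/-- `p`-maximal connectivity at the single density level `τ₀`, at scale `r₀`, with
    constants `(C, δ)`, for the subset `Y` with the restricted metric and measure. -/
def MaxConnOnAtLevel (μ : Measure X) (Y : Set X) (C δ τ₀ p r₀ : ℝ) : Prop :=
  ∀ x ∈ Y, ∀ y ∈ Y, 0 < dist x y → dist x y < r₀ →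
    ∀ E : Set X, MeasurableSet E →
      maxSetOn μ Y (C * dist x y) E x < ENNReal.ofReal τ₀ →
      maxSetOn μ Y (C * dist x y) E y < ENNReal.ofReal τ₀ →
      ∃ L : ℝ, 0 < L ∧ ∃ γ : ℝ → X,
        LipschitzOnWith 1 γ (Icc 0 L) ∧ γ 0 = x ∧ γ L = y ∧
        (∀ t ∈ Icc (0 : ℝ) L, γ t ∈ Y) ∧ L ≤ C * dist x y ∧
        (∫ t in (0 : ℝ)..L, E.indicator (fun _ => (1 : ℝ)) (γ t)) ≤
          δ * τ₀ ^ (1 / p) * dist x y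

/-- `p`-maximal connectivity at scale `r₀` (at all density levels `τ > 0`). -/
def MaxConnOn (μ : Measure X) (Y : Set X) (C δ p r₀ : ℝ) : Prop :=
  ∀ τ : ℝ, 0 < τ → MaxConnOnAtLevel μ Y C δ τ p r₀

/-- `Ω` is an `ε`-filling of `Y` at scale `r` with constants `(p, C, D)`. -/
def IsPIFilling (μ : Measure X) (Y Ω : Set X) (ε C D p r : ℝ) : Prop :=
  IsClosed Ω ∧ Y ⊆ Ω ∧
  (∀ x ∈ Y, μ ((Ω ∩ ball x r) \ Y) < ENNReal.ofReal ε * μ (Ω ∩ ball x r)) ∧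
  DoublingOnAtScale μ Ω D (2 * r) ∧
  (∀ f : X → ℝ, (∃ K : ℝ≥0, LipschitzOnWith K f Ω) →
    ∀ x ∈ Ω, ∀ s : ℝ, 0 < s → Metric.diam (Ω ∩ ball x s) ≤ 2 * r →
      (⨍ y in Ω ∩ ball x s, |f y - ⨍ z in Ω ∩ ball x s, f z ∂μ| ∂μ) ≤
        C * Metric.diam (Ω ∩ ball x s) *
          (⨍ y in Ω ∩ ball x (C * s), lipConstOn Ω f y ^ p ∂μ) ^ (1 / p))

/-- `Y` is `(ε, C, D, p)`-PI fillable at scale `r₀`. -/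
def PIFillable (μ : Measure X) (Y : Set X) (ε C D p r₀ : ℝ) : Prop :=
  ∀ r : ℝ, 0 < r → r < r₀ → ∃ Ω : Set X, IsPIFilling μ Y Ω ε C D p r

/-- `Y` is asymptotically `p`-Poincaré fillable with constants `(C, D)`. -/
def AsympPIFillable (μ : Measure X) (Y : Set X) (C D p : ℝ) : Prop :=
  ∀ ε : ℝ, 0 < ε → ∃ r₀ : ℝ, 0 < r₀ ∧ PIFillable μ Y ε C D p r₀

/-- `Y` is `(ε, A)`-almost uniform at scale `r₀`. -/
def AlmostUniform (μ : Measure X) (Y : Set X) (ε A r₀ : ℝ) : Prop :=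
  ∀ r : ℝ, 0 < r → r < r₀ → ∃ Ω : Set X,
    IsConnected Ω ∧ IsComplete Ω ∧ IsUniformUpTo A Ω (4 * r) ∧ Y ⊆ Ω ∧
    ∀ x ∈ Y, μ ((Ω ∩ ball x r) \ Y) < ENNReal.ofReal ε * μ (Ω ∩ ball x r)

/-- Pointwise `(1,p)`-Poincaré inequality at scale `r₀` with constant `C`. -/
def PointwisePoincareAtScale (μ : Measure X) (p C r₀ : ℝ) : Prop :=
  ∀ f : X → ℝ, (∃ K : ℝ≥0, LipschitzWith K f) →
    ∀ x y : X, 0 < dist x y → dist x y < r₀ →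
      |f x - f y| ≤ C * dist x y *
        ((maxFnOn μ univ (C * dist x y) (fun z => lipConstOn univ f z ^ p) x).toReal ^ (1 / p) +
         (maxFnOn μ univ (C * dist x y) (fun z => lipConstOn univ f z ^ p) y).toReal ^ (1 / p))

/-- If `Y` is a closed subset of a complete metric measure space
`(X,d,μ)` which is `(ε, C, D, p)`-PI fillable at scale `r₀`, then `(Y, d, μ|_Y)`
is `D/(1-ε)`-doubling at scale `r₀`. -/
theorem fillable_doubling {X : Type u} [MetricSpace X] [MeasurableSpace X]
    [CompleteSpace X] (μ : Measure X) (D C p r₀ ε : ℝ)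
    (hD : 1 ≤ D) (hC : 1 ≤ C) (hp : 1 ≤ p) (hr : 0 < r₀)
    (hε : 0 < ε) (hε1 : ε < 1)
    (Y : Set X) (hY : IsClosed Y) (hfill : PIFillable μ Y ε C D p r₀) :
    ∀ x ∈ Y, ∀ r : ℝ, 0 < r → r < r₀ →
      0 < μ (Y ∩ ball x (2 * r)) ∧
        μ (Y ∩ ball x (2 * r)) ≤
          ENNReal.ofReal (D / (1 - ε)) * μ (Y ∩ ball x r) := by
  intro x hx r hr0 hrr0
  obtain ⟨Ω, hΩclosed, hYΩ, hfillε, hdoub, _⟩ := hfill r hr0 hrr0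
  have hxΩ : x ∈ Ω := hYΩ hx
  have h1ε : (0:ℝ) < 1 - ε := by linarith
  have hDε : (0:ℝ) < D / (1 - ε) := div_pos (by linarith) h1ε
  -- doubling positivity at s = r/2 gives positivity of μ (Ω ∩ ball x r)
  have hposr : 0 < μ (Ω ∩ ball x r) := by
    have := (hdoub x hxΩ (r / 2) (by linarith) (by linarith)).1
    rwa [show 2 * (r / 2) = r by ring] at this
  have hdub := (hdoub x hxΩ r hr0 (by linarith)).2
  have hdiff := hfillε x hx
  set a := μ (Ω ∩ ball x r) with ha
  set b := μ (Y ∩ ball x r) with hb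
  set c := μ ((Ω ∩ ball x r) \ Y) with hc
  have hsub : a ≤ b + c := by
    refine le_trans (measure_mono ?_) (measure_union_le _ _)
    intro z hz
    by_cases hzY : z ∈ Y
    · exact Or.inl ⟨hzY, hz.2⟩
    · exact Or.inr ⟨hz, hzY⟩
  have hmono2 : μ (Y ∩ ball x (2 * r)) ≤ μ (Ω ∩ ball x (2 * r)) :=
    measure_mono (inter_subset_inter_left _ hYΩ)
  have hmonoY : b ≤ μ (Y ∩ ball x (2 * r)) :=
    measure_mono (inter_subset_inter_right _ (ball_subset_ball (by linarith)))
  by_cases hbtop : b = ⊤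
  · constructor
    · exact lt_of_lt_of_le (by simp [hbtop]) hmonoY
    · rw [hbtop, ENNReal.mul_top (ENNReal.ofReal_pos.mpr hDε).ne']
      exact le_top
  · -- a is finite
    have hctop : c ≠ ⊤ := hdiff.ne_top
    have hatop : a ≠ ⊤ := by
      intro h
      have : (⊤ : ℝ≥0∞) ≤ b + c := h ▸ hsub
      exact absurd (top_le_iff.mp this) (by simp [ENNReal.add_eq_top, hbtop, hctop])
    set A := a.toReal with hA
    set B := b.toReal with hB
    set Cc := c.toReal with hCc
    have hApos : 0 < A := ENNReal.toReal_pos hposr.ne' hatop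
    have hrsub : A ≤ B + Cc := by
      have := ENNReal.toReal_mono (by simp [ENNReal.add_eq_top, hbtop, hctop]) hsub
      rwa [ENNReal.toReal_add hbtop hctop] at this
    have hrc : Cc < ε * A := by
      have h2 : c < ENNReal.ofReal ε * a := hdiff
      have h3 : (ENNReal.ofReal ε * a).toReal = ε * A := by
        rw [ENNReal.toReal_mul, ENNReal.toReal_ofReal hε.le]
      have := ENNReal.toReal_strict_mono (by
        exact ENNReal.mul_ne_top ENNReal.ofReal_ne_top hatop) h2
      rwa [h3] at this
    have hkey : (1 - ε) * A ≤ B := by nlinarith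
    have hBpos : 0 < B := lt_of_lt_of_le (by nlinarith) hkey
    constructor
    · refine lt_of_lt_of_le ?_ hmonoY
      exact (ENNReal.toReal_pos_iff.mp hBpos).1
    · calc μ (Y ∩ ball x (2 * r)) ≤ μ (Ω ∩ ball x (2 * r)) := hmono2
        _ ≤ ENNReal.ofReal D * a := hdub
        _ ≤ ENNReal.ofReal (D / (1 - ε)) * b := by
            rw [show a = ENNReal.ofReal A from (ENNReal.ofReal_toReal hatop).symm,
                show b = ENNReal.ofReal B from (ENNReal.ofReal_toReal hbtop).symm,
                ← ENNReal.ofReal_mul (by linarith : (0:ℝ) ≤ D),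
                ← ENNReal.ofReal_mul hDε.le]
            apply ENNReal.ofReal_le_ofReal
            rw [div_mul_eq_mul_div, le_div_iff₀ h1ε]
            nlinarith

end
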